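/- Let n ≥ 2, p ∈ (0, 1], and let (V_t) be a random process over {0, 1, …, n} adapted to a filtration (F_t), with stopping time S = inf{t : V_t = n}. Assume that for all t, P(V_{t+1} > V_t | F_t)·1{t < S} ≥ p·1{t < S}, and that V_{t+1} ≥ V_t − n always (V is bounded in {0,…,n}). Define X_t = (n/p)^n − (n/p)^{V_t}. Then for all t, (X_t − E[X_{t+1} | F_t])·1{t < S} ≥ 1{t < S}, and consequently E[S] ≤ (n/p)^n, so S is integrable. -/

import Mathlib

/-!
With `c = n / p ≥ 1` the potential `X_t = cⁿ - c^{V_t}` takes values in `[0, cⁿ]`. Whatever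
happens, `c^{V_{t+1}} ≥ 1`, and with conditional probability at least `p` the level rises, so that
`c^{V_{t+1}} ≥ c^{V_t + 1}`. Hence
`E[c^{V_{t+1}} | F_t] ≥ 1 + p (c^{V_t + 1} - 1) = 1 + n c^{V_t} - p ≥ c^{V_t} + 1`,
the last step because `n ≥ 2` and `p ≤ 1`: before the hitting time the potential drops by at
least one in conditional expectation. Telescoping this additive drift gives
`∑_{t < T} P(S > t) ≤ E[X_0] ≤ cⁿ` for every `T`, and `E[S] = ∑_t P(S > t)`.
-/

open MeasureTheory Filter Set ENNReal

lemma ENat.toENNReal_eq_tsum_ite_lt (k : ℕ∞) :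
    (k : ℝ≥0∞) = ∑' t : ℕ, if (t : ℕ∞) < k then 1 else 0 := by
  induction k using ENat.recTopCoe with
  | top => simp
  | coe k =>
    rw [tsum_eq_sum (s := Finset.range k) fun t ht => by simpa using ht]
    simp [Finset.sum_ite_of_true fun t ht => Finset.mem_range.mp ht]

lemma ENat.natCast_lt_sInf_image_natCast_iff {P : ℕ → Prop} {t : ℕ} :
    (t : ℕ∞) < sInf (((↑) : ℕ → ℕ∞) '' {s | P s}) ↔ ∀ s ≤ t, ¬ P s := by
  rw [← ENat.add_one_le_iff (ENat.natCast_ne_top t), le_sInf_iff, forall_mem_image]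
  norm_cast
  exact ⟨fun h s hs hP => by have := h hP; omega,
    fun h s hP => by by_contra! hs; exact h s (by omega) hP⟩

lemma one_le_natCast_div {n : ℕ} (hn : 1 ≤ n) {p : ℝ} (hp0 : 0 < p) (hp1 : p ≤ 1) :
    1 ≤ (n : ℝ) / p := by
  rw [le_div_iff₀ hp0, one_mul]
  exact hp1.trans (by exact_mod_cast hn)

lemma Measurable.of_natCast_real {α : Type*} {m : MeasurableSpace α} {f : α → ℕ}
    (hf : Measurable fun x => (f x : ℝ)) : Measurable f := by
  simpa only [Function.comp_def, Nat.floor_natCast] using (Nat.measurable_floor (R := ℝ)).comp hf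

lemma mul_indicator_le_mul_indicator_iff {α R : Type*} [MulZeroOneClass R] [Preorder R]
    {s : Set α} {x : α} {a b : R} :
    a * s.indicator (fun _ => 1) x ≤ b * s.indicator (fun _ => 1) x ↔ (x ∈ s → a ≤ b) := by
  by_cases hx : x ∈ s <;> simp [hx]

namespace MeasureTheory

variable {Ω : Type*} {m m0 : MeasurableSpace Ω} {μ : Measure Ω}

lemma antitone_setOf_natCast_lt (τ : Ω → ℕ∞) : Antitone fun t : ℕ => {ω | (t : ℕ∞) < τ ω} :=
  fun s t hst ω (hω : (t : ℕ∞) < τ ω) =>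
    show (s : ℕ∞) < τ ω from (Nat.cast_le.2 hst).trans_lt hω

lemma measurableSet_natCast_lt_sInf_image_natCast {ℱ : Filtration ℕ m0} {E : ℕ → Set Ω}
    (hE : ∀ t, MeasurableSet[ℱ t] (E t)) (t : ℕ) :
    MeasurableSet[ℱ t] {ω | (t : ℕ∞) < sInf (((↑) : ℕ → ℕ∞) '' {s | ω ∈ E s})} := by
  simp_rw [ENat.natCast_lt_sInf_image_natCast_iff, ofPred_forall]
  exact .iInter fun s => .iInter fun hs => (ℱ.mono hs _ (hE s)).compl

lemma lintegral_enat_eq_tsum_measure_lt {τ : Ω → ℕ∞}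
    (hτ : ∀ t : ℕ, MeasurableSet {ω | (t : ℕ∞) < τ ω}) :
    ∫⁻ ω, (τ ω : ℝ≥0∞) ∂μ = ∑' t : ℕ, μ {ω | (t : ℕ∞) < τ ω} := by
  simp_rw [ENat.toENNReal_eq_tsum_ite_lt]
  rw [lintegral_tsum fun t =>
    (Measurable.ite (hτ t) measurable_const measurable_const).aemeasurable]
  congr 1 with t
  rw [← lintegral_indicator_one (hτ t)]
  simp only [indicator_apply, mem_ofPred_eq, Pi.one_apply]

section AdditiveDrift

variable [IsFiniteMeasure μ] {ℱ : Filtration ℕ m0} {X : ℕ → Ω → ℝ} {A : ℕ → Set Ω}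

lemma measureReal_add_setIntegral_succ_le_of_drift (hX : ∀ t, Integrable (X t) μ)
    (hX0 : ∀ t ω, 0 ≤ X t ω) (hA : ∀ t, MeasurableSet[ℱ t] (A t)) (hA_anti : Antitone A)
    (hdrift : ∀ t, ∀ᵐ ω ∂μ, ω ∈ A t → 1 ≤ X t ω - μ[X (t + 1) | ℱ t] ω) (t : ℕ) :
    μ.real (A t) + ∫ ω in A (t + 1), X (t + 1) ω ∂μ ≤ ∫ ω in A t, X t ω ∂μ := by
  have hstep : μ.real (A t) ≤ ∫ ω in A t, (X t ω - μ[X (t + 1) | ℱ t] ω) ∂μ :=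
    calc μ.real (A t) = ∫ _ in A t, (1 : ℝ) ∂μ := by simp
      _ ≤ _ := setIntegral_mono_ae_restrict (integrable_const 1).integrableOn
          ((hX t).sub integrable_condExp).integrableOn
          ((ae_restrict_iff' (ℱ.le t _ (hA t))).2 (hdrift t))
  have hshrink : ∫ ω in A (t + 1), X (t + 1) ω ∂μ ≤ ∫ ω in A t, X (t + 1) ω ∂μ :=
    setIntegral_mono_set (hX (t + 1)).integrableOn (ae_of_all _ (hX0 (t + 1)))
      (hA_anti t.le_succ).eventuallyLE
  rw [integral_sub (hX t).integrableOn integrable_condExp.integrableOn,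
    setIntegral_condExp (ℱ.le t) (hX (t + 1)) (hA t)] at hstep
  linarith

lemma sum_measureReal_le_of_drift (hX : ∀ t, Integrable (X t) μ) (hX0 : ∀ t ω, 0 ≤ X t ω)
    (hA : ∀ t, MeasurableSet[ℱ t] (A t)) (hA_anti : Antitone A)
    (hdrift : ∀ t, ∀ᵐ ω ∂μ, ω ∈ A t → 1 ≤ X t ω - μ[X (t + 1) | ℱ t] ω) (T : ℕ) :
    ∑ t ∈ Finset.range T, μ.real (A t) ≤ ∫ ω in A 0, X 0 ω ∂μ := by
  suffices
      ∑ t ∈ Finset.range T, μ.real (A t) + ∫ ω in A T, X T ω ∂μ ≤ ∫ ω in A 0, X 0 ω ∂μ by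
    linarith [setIntegral_nonneg (μ := μ) (ℱ.le T _ (hA T)) fun ω _ => hX0 T ω]
  induction T with
  | zero => simp
  | succ T ih =>
    rw [Finset.sum_range_succ]
    linarith [measureReal_add_setIntegral_succ_le_of_drift hX hX0 hA hA_anti hdrift T]

lemma tsum_measure_le_of_drift (hX : ∀ t, Integrable (X t) μ) (hX0 : ∀ t ω, 0 ≤ X t ω)
    (hA : ∀ t, MeasurableSet[ℱ t] (A t)) (hA_anti : Antitone A)
    (hdrift : ∀ t, ∀ᵐ ω ∂μ, ω ∈ A t → 1 ≤ X t ω - μ[X (t + 1) | ℱ t] ω) :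
    ∑' t, μ (A t) ≤ ENNReal.ofReal (∫ ω, X 0 ω ∂μ) := by
  refine ENNReal.tsum_le_of_sum_range_le fun T => ?_
  calc ∑ t ∈ Finset.range T, μ (A t)
      = ENNReal.ofReal (∑ t ∈ Finset.range T, μ.real (A t)) := by
        rw [ENNReal.ofReal_sum_of_nonneg fun t _ => measureReal_nonneg]
        simp [measureReal_def]
    _ ≤ ENNReal.ofReal (∫ ω, X 0 ω ∂μ) := ENNReal.ofReal_le_ofReal <|
        (sum_measureReal_le_of_drift hX hX0 hA hA_anti hdrift T).trans
          (setIntegral_le_integral (hX 0) (ae_of_all _ (hX0 0)))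

end AdditiveDrift

section ExponentialPotential

lemma one_add_mul_indicator_lt_le_pow {c : ℝ} (hc : 1 ≤ c) {W W' : Ω → ℕ} (ω : Ω) :
    1 + (c ^ (W ω + 1) - 1) * {ω | W ω < W' ω}.indicator (fun _ => (1 : ℝ)) ω ≤ c ^ W' ω := by
  by_cases h : W ω < W' ω
  · simpa [indicator_of_mem (show ω ∈ {ω | W ω < W' ω} from h)] using pow_le_pow_right₀ hc h
  · simpa [indicator_of_notMem (show ω ∉ {ω | W ω < W' ω} from h)] using one_le_pow₀ hc

variable [IsFiniteMeasure μ]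

lemma integrable_pow_of_le {c : ℝ} (hc : 1 ≤ c) {W : Ω → ℕ} {N : ℕ} (hW : Measurable W)
    (hWN : ∀ ω, W ω ≤ N) : Integrable (fun ω => c ^ W ω) μ :=
  .of_bound (measurable_from_nat.comp hW).aestronglyMeasurable (c ^ N) <|
    ae_of_all _ fun ω => by
      rw [Real.norm_of_nonneg (by positivity)]
      exact pow_le_pow_right₀ hc (hWN ω)

lemma one_add_mul_condExp_indicator_lt_le_condExp_pow (hm : m ≤ m0) {c : ℝ} (hc : 1 ≤ c)
    {W W' : Ω → ℕ} {N : ℕ} (hW : Measurable[m] W) (hW' : Measurable W')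
    (hW'N : ∀ ω, W' ω ≤ N) :
    ∀ᵐ ω ∂μ,
      1 + (c ^ (W ω + 1) - 1) * μ[{ω | W ω < W' ω}.indicator (fun _ => (1 : ℝ)) | m] ω ≤
        μ[fun ω => c ^ W' ω | m] ω := by
  set B := {ω | W ω < W' ω}
  set f : Ω → ℝ := fun ω => c ^ (W ω + 1) - 1
  have hf : StronglyMeasurable[m] f :=
    ((measurable_from_nat (f := fun k => c ^ (k + 1) - 1)).comp hW).stronglyMeasurable
  have hind : Integrable (B.indicator fun _ => (1 : ℝ)) μ :=
    (integrable_const 1).indicator (measurableSet_lt (hW.mono hm le_rfl) hW')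
  have hpow : Integrable (fun ω => c ^ W' ω) μ := integrable_pow_of_le hc hW' hW'N
  have hfind : Integrable (f * B.indicator fun _ => (1 : ℝ)) μ := by
    refine hpow.mono' ((hf.mono hm).aestronglyMeasurable.mul hind.1) (ae_of_all _ fun ω => ?_)
    have hle := one_add_mul_indicator_lt_le_pow hc (W := W) (W' := W') ω
    have hnonneg : 0 ≤ f ω * B.indicator (fun _ => (1 : ℝ)) ω :=
      mul_nonneg (sub_nonneg.2 (one_le_pow₀ hc)) (indicator_nonneg (fun _ _ => zero_le_one) ω)
    rw [Pi.mul_apply, Real.norm_of_nonneg hnonneg]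
    linarith
  filter_upwards [condExp_mono ((integrable_const 1).add hfind) hpow
      (ae_of_all _ (one_add_mul_indicator_lt_le_pow hc)),
    condExp_add (integrable_const 1) hfind m,
    condExp_mul_of_stronglyMeasurable_left hf hfind hind] with ω hmono hadd hmul
  rwa [hadd, Pi.add_apply, hmul, condExp_const hm] at hmono

lemma one_le_sub_condExp_pow_sub_pow (hm : m ≤ m0) {n : ℕ} (hn : 2 ≤ n) {p : ℝ} (hp0 : 0 < p)
    (hp1 : p ≤ 1) {W W' : Ω → ℕ} (hW : Measurable[m] W) (hW' : Measurable W')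
    (hW'n : ∀ ω, W' ω ≤ n) :
    ∀ᵐ ω ∂μ, p ≤ μ[{ω | W ω < W' ω}.indicator (fun _ => (1 : ℝ)) | m] ω →
      1 ≤ ((n / p : ℝ) ^ n - (n / p) ^ W ω) -
        μ[fun ω => (n / p : ℝ) ^ n - (n / p) ^ W' ω | m] ω := by
  set c := (n : ℝ) / p
  have hn' : (2 : ℝ) ≤ n := by exact_mod_cast hn
  have hpc : p * c = n := mul_div_cancel₀ _ hp0.ne'
  have hc : 1 ≤ c := one_le_natCast_div (by omega) hp0 hp1
  filter_upwards [one_add_mul_condExp_indicator_lt_le_condExp_pow hm hc hW hW' hW'n,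
    condExp_sub (integrable_const (c ^ n)) (integrable_pow_of_le hc hW' hW'n) m]
    with ω hE hsub hq
  rw [Pi.sub_apply, condExp_const hm] at hsub
  rw [pow_succ] at hE
  change 1 ≤ c ^ n - c ^ W ω - μ[(fun _ => c ^ n) - fun ω => c ^ W' ω | m] ω
  rw [hsub]
  have hw : 1 ≤ c ^ W ω := one_le_pow₀ hc
  nlinarith [mul_le_mul_of_nonneg_left hq (by nlinarith : (0 : ℝ) ≤ c ^ W ω * c - 1)]

end ExponentialPotential

end MeasureTheory

/-- Integrability lemma: a process on fitness levels `{0, …, n}` that increases with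
probability at least `p` each step before hitting `n` satisfies an additive drift
condition for the exponential potential `X_t = (n/p)^n - (n/p)^{V_t}`, whence the
hitting time of `n` has expectation at most `(n/p)^n` and is integrable. -/
theorem integrability_of_hitting_time
    {Ω : Type*} {m0' : MeasurableSpace Ω} (μ : Measure Ω) [IsProbabilityMeasure μ]
    (ℱ : Filtration ℕ m0') (n : ℕ) (hn : 2 ≤ n) (p : ℝ) (hp0 : 0 < p) (hp1 : p ≤ 1)
    (V : ℕ → Ω → ℕ) (hadapt : Adapted ℱ fun t ω => (V t ω : ℝ))
    (hrange : ∀ t ω, V t ω ≤ n)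
    (S : Ω → ℕ∞)
    (hS : ∀ ω, S ω = sInf ((↑) '' {t : ℕ | V t ω = n}))
    (hup : ∀ t : ℕ, ∀ᵐ ω ∂μ,
      p * Set.indicator {ω' | (t : ℕ∞) < S ω'} (fun _ => (1 : ℝ)) ω ≤
        (μ[Set.indicator {ω' | V t ω' < V (t + 1) ω'} (fun _ => (1 : ℝ)) | ℱ t]) ω *
          Set.indicator {ω' | (t : ℕ∞) < S ω'} (fun _ => (1 : ℝ)) ω)
    (X : ℕ → Ω → ℝ)
    (hX : ∀ t ω, X t ω = ((n : ℝ) / p) ^ n - ((n : ℝ) / p) ^ (V t ω)) :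
    (∀ t : ℕ, ∀ᵐ ω ∂μ,
      Set.indicator {ω' | (t : ℕ∞) < S ω'} (fun _ => (1 : ℝ)) ω ≤
        (X t ω - (μ[X (t + 1) | ℱ t]) ω) *
          Set.indicator {ω' | (t : ℕ∞) < S ω'} (fun _ => (1 : ℝ)) ω) ∧
      ∫⁻ ω, (S ω : ℝ≥0∞) ∂μ ≤ ENNReal.ofReal (((n : ℝ) / p) ^ n) ∧
      ∫⁻ ω, (S ω : ℝ≥0∞) ∂μ < ⊤ := by
  have hX_eq : X = fun t ω => ((n : ℝ) / p) ^ n - ((n : ℝ) / p) ^ V t ω :=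
    funext fun t => funext (hX t)
  have hV : ∀ t, Measurable[ℱ t] (V t) := fun t => (hadapt t).of_natCast_real
  have hA : ∀ t : ℕ, MeasurableSet[ℱ t] {ω | (t : ℕ∞) < S ω} := fun t => by
    simp_rw [hS]
    exact measurableSet_natCast_lt_sInf_image_natCast
      (fun s => hV s (measurableSet_singleton n)) t
  have hdrift : ∀ t : ℕ, ∀ᵐ ω ∂μ, ω ∈ {ω | (t : ℕ∞) < S ω} →
      1 ≤ X t ω - μ[X (t + 1) | ℱ t] ω := fun t => by
    rw [hX_eq]
    filter_upwards [hup t, one_le_sub_condExp_pow_sub_pow (ℱ.le t) hn hp0 hp1 (hV t)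
      ((hV (t + 1)).mono (ℱ.le _) le_rfl) (hrange (t + 1))] with ω hq hω
    exact fun hωA => hω (mul_indicator_le_mul_indicator_iff.1 hq hωA)
  have hc : 1 ≤ (n : ℝ) / p := one_le_natCast_div (by omega) hp0 hp1
  have hX0 : ∀ t ω, 0 ≤ X t ω := fun t ω => by
    rw [hX, sub_nonneg]
    exact pow_le_pow_right₀ hc (hrange t ω)
  have hX_int : ∀ t, Integrable (X t) μ := fun t => by
    rw [hX_eq]
    exact (integrable_const _).sub
      (integrable_pow_of_le hc ((hV t).mono (ℱ.le t) le_rfl) (hrange t))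
  have hX_le : ∫ ω, X 0 ω ∂μ ≤ ((n : ℝ) / p) ^ n :=
    calc ∫ ω, X 0 ω ∂μ ≤ ∫ _, ((n : ℝ) / p) ^ n ∂μ :=
          integral_mono (hX_int 0) (integrable_const _) fun ω => by
            rw [hX]; exact sub_le_self _ (by positivity)
      _ = ((n : ℝ) / p) ^ n := by simp
  have hS_le : ∫⁻ ω, (S ω : ℝ≥0∞) ∂μ ≤ ENNReal.ofReal (((n : ℝ) / p) ^ n) := by
    rw [lintegral_enat_eq_tsum_measure_lt fun t => ℱ.le t _ (hA t)]
    exact (tsum_measure_le_of_drift hX_int hX0 hA (antitone_setOf_natCast_lt S) hdrift).trans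
      (ofReal_le_ofReal hX_le)
  refine ⟨fun t => (hdrift t).mono fun ω h => ?_, hS_le, hS_le.trans_lt ofReal_lt_top⟩
  simpa only [one_mul] using mul_indicator_le_mul_indicator_iff.2 h
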